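/- Let a and a† be linear endomorphisms of a nonzero complex vector space D satisfying [a, a†] = c·1 with c ≠ 0. Then no power of a vanishes: a^(K+1) ≠ 0 for every natural number K. Equivalently, if a^(K+1) = 0 on D for some K, then D = {0} or c = 0. -/
import Mathlib


/-- On a nonzero complex vector space, the CCR `[a, a†] = c • 1` with `c ≠ 0`
forbids any power of `a` from vanishing: `a^(K+1) ≠ 0` for all `K`. -/
theorem stmt_1 {D : Type*} [AddCommGroup D] [Module ℂ D] [Nontrivial D]
    (a adag : Module.End ℂ D) (c : ℂ) (hc : c ≠ 0)
    (hccr : a * adag - adag * a = c • (1 : Module.End ℂ D)) :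
    ∀ K : ℕ, a ^ (K + 1) ≠ 0 := by
  have key : ∀ n : ℕ, a ^ (n + 1) * adag - adag * a ^ (n + 1)
      = ((n + 1 : ℂ) * c) • a ^ n := by
    intro n
    induction n with
    | zero => simpa using hccr
    | succ n ih =>
      have : a ^ (n + 2) * adag - adag * a ^ (n + 2)
          = a * (a ^ (n + 1) * adag - adag * a ^ (n + 1))
            + (a * adag - adag * a) * a ^ (n + 1) := by
        simp only [pow_succ']
        noncomm_ring
      rw [this, ih, hccr]
      rw [smul_mul_assoc, one_mul, mul_smul_comm, ← pow_succ']
      rw [← add_smul]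
      push_cast
      ring_nf
  have ne : ∀ n : ℕ, a ^ n ≠ 0 := by
    intro n
    induction n with
    | zero => simpa using (one_ne_zero : (1 : Module.End ℂ D) ≠ 0)
    | succ n ih =>
      intro h
      have := key n
      rw [h, zero_mul, mul_zero, sub_zero] at this
      have hscal : ((n + 1 : ℂ) * c) ≠ 0 := by
        exact mul_ne_zero (Nat.cast_add_one_ne_zero n) hc
      exact ih (by
        have := this.symm
        exact (smul_eq_zero.mp this).resolve_left hscal)
  exact fun K => ne (K + 1)
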